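/- arXiv:2506.09651 — 9 statements merged into one kernel-verified Lean document; each statement's English description precedes it below -/
import Mathlib

section
/- Let m ≥ 5 be a prime and let h be an integer with 3 ≤ h ≤ m−1, and set e = 3^h + 13. Then e does not lie in the 3-cyclotomic coset C_1 of 1 modulo 3^m − 1, and the 3-cyclotomic coset C_e of e modulo 3^m − 1 has exactly m elements. -/
/-- The 3-cyclotomic coset of `i` modulo `n`: the set of residues `i * 3^s mod n`. -/
def cyclotomicCoset (n i : ℕ) : Set ℕ := {j | ∃ s : ℕ, j = i * 3 ^ s % n}

lemma per_aux (n m e s : ℕ) (hpow : (3:ℕ) ^ m ≡ 1 [MOD n]) :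
    e * 3 ^ s % n = e * 3 ^ (s % m) % n := by
  have h3 : (3:ℕ) ^ s ≡ 3 ^ (s % m) [MOD n] := by
    conv_lhs => rw [← Nat.div_add_mod s m]
    rw [pow_add, pow_mul]
    calc ((3:ℕ)^m)^(s/m) * 3^(s%m) ≡ 1^(s/m) * 3^(s%m) [MOD n] :=
          Nat.ModEq.mul_right _ (hpow.pow _)
      _ = 3^(s%m) := by rw [one_pow, one_mul]
  exact Nat.ModEq.mul_left e h3

lemma key_aux (n : ℕ) [NeZero n] (hcop : Nat.Coprime 3 n) (e m s₁ s₂ : ℕ)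
    (hmp : Nat.Prime m) (hper : e * 3 ^ m % n = e % n)
    (h12 : s₁ < s₂) (h2m : s₂ < m)
    (heq : e * 3 ^ s₁ % n = e * 3 ^ s₂ % n) : n ∣ 2 * e := by
  set u : (ZMod n)ˣ := ZMod.unitOfCoprime 3 hcop with hu
  have hu3 : ((u : (ZMod n)ˣ) : ZMod n) = 3 := ZMod.coe_unitOfCoprime 3 hcop
  set x : ZMod n := ((e : ℕ) : ZMod n) with hx
  have hcast : ∀ s : ℕ, ((e * 3 ^ s : ℕ) : ZMod n)
      = x * ((u ^ (s : ℤ) : (ZMod n)ˣ) : ZMod n) := by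
    intro s
    push_cast
    rw [zpow_natCast, ← hu3]
    simp [Units.val_pow_eq_pow_val]
    rfl
  let S : AddSubgroup ℤ :=
  { carrier := {t : ℤ | x * ((u ^ t : (ZMod n)ˣ) : ZMod n) = x}
    zero_mem' := by simp
    add_mem' := by
      intro a b ha hb
      simp only [Set.mem_setOf_eq] at *
      rw [zpow_add, Units.val_mul, ← mul_assoc, ha, hb]
    neg_mem' := by
      intro a ha
      simp only [Set.mem_setOf_eq] at *
      calc x * ((u ^ (-a) : (ZMod n)ˣ) : ZMod n)
          = (x * ((u ^ a : (ZMod n)ˣ) : ZMod n)) * ((u ^ (-a) : (ZMod n)ˣ) : ZMod n) := by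
            rw [ha]
        _ = x * (((u ^ a * u ^ (-a)) : (ZMod n)ˣ) : ZMod n) := by
            rw [Units.val_mul, mul_assoc]
        _ = x := by rw [← zpow_add]; simp }
  have hm_mem : (m : ℤ) ∈ S := by
    have : ((e * 3 ^ m : ℕ) : ZMod n) = ((e : ℕ) : ZMod n) := by
      rw [ZMod.natCast_eq_natCast_iff]
      exact hper
    show x * ((u ^ (m : ℤ) : (ZMod n)ˣ) : ZMod n) = x
    rw [← hcast, this, hx]
  have heqz : x * ((u ^ (s₁ : ℤ) : (ZMod n)ˣ) : ZMod n)
      = x * ((u ^ (s₂ : ℤ) : (ZMod n)ˣ) : ZMod n) := by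
    rw [← hcast, ← hcast]
    exact_mod_cast (ZMod.natCast_eq_natCast_iff _ _ _).mpr heq
  set d : ℕ := s₂ - s₁ with hd
  have hd_mem : (d : ℤ) ∈ S := by
    show x * ((u ^ (d : ℤ) : (ZMod n)ˣ) : ZMod n) = x
    have hdz : (d : ℤ) = (s₂ : ℤ) + (-(s₁ : ℤ)) := by
      simp [hd]; omega
    rw [hdz, zpow_add, Units.val_mul, ← mul_assoc, ← heqz, mul_assoc,
      ← Units.val_mul, ← zpow_add]
    simp
  have hdpos : 0 < d := by omega
  have hdlt : d < m := by omega
  have hcop_md : Nat.gcd m d = 1 :=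
    (Nat.Prime.coprime_iff_not_dvd hmp).mpr
      (fun hdvd => absurd (Nat.le_of_dvd hdpos hdvd) (not_le.mpr hdlt))
  have hbez : (1 : ℤ) = (m : ℤ) * Int.gcdA m d + (d : ℤ) * Int.gcdB m d := by
    have := Int.gcd_eq_gcd_ab (m : ℤ) (d : ℤ)
    rwa [Int.gcd_natCast_natCast, hcop_md] at this
  have h1 : (1 : ℤ) ∈ S := by
    rw [hbez]
    exact S.add_mem
      (by simpa [smul_eq_mul, mul_comm] using S.zsmul_mem hm_mem (Int.gcdA m d))
      (by simpa [smul_eq_mul, mul_comm] using S.zsmul_mem hd_mem (Int.gcdB m d))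
  have h3x : x * 3 = x := by
    have := h1
    simp only [S, AddSubgroup.mem_mk, Set.mem_setOf_eq, zpow_one, hu3] at this
    change x * ((u ^ (1:ℤ) : (ZMod n)ˣ) : ZMod n) = x at this
    rwa [zpow_one, hu3] at this
  have h2x : ((2 * e : ℕ) : ZMod n) = 0 := by
    push_cast
    rw [← hx]
    linear_combination h3x
  exact (ZMod.natCast_eq_zero_iff _ _).mp h2x

theorem stmt0 (m h : ℕ) (hm : Nat.Prime m) (hm5 : 5 ≤ m)
    (hh1 : 3 ≤ h) (hh2 : h ≤ m - 1) :
    (3 ^ h + 13) ∉ cyclotomicCoset (3 ^ m - 1) 1 ∧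
      (cyclotomicCoset (3 ^ m - 1) (3 ^ h + 13)).ncard = m := by
  set n : ℕ := 3 ^ m - 1 with hn
  set e : ℕ := 3 ^ h + 13 with he
  have hmpos : 0 < m := by omega
  have h3m1 : (1:ℕ) ≤ 3 ^ m := Nat.one_le_pow _ _ (by norm_num)
  have h3m : 3 ^ m = n + 1 := by omega
  have hB : 3 ^ m = 3 ^ (m-1) * 3 := by
    conv_lhs => rw [show m = (m-1) + 1 by omega]
    rw [pow_succ]
  have hB81 : 81 ≤ 3 ^ (m-1) := by
    calc (81:ℕ) = 3 ^ 4 := by norm_num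
    _ ≤ 3 ^ (m-1) := Nat.pow_le_pow_right (by norm_num) (by omega)
  have hAB : 3 ^ h ≤ 3 ^ (m-1) := Nat.pow_le_pow_right (by norm_num) hh2
  have h27 : (27:ℕ) ≤ 3 ^ h := by
    calc (27:ℕ) = 3 ^ 3 := by norm_num
    _ ≤ 3 ^ h := Nat.pow_le_pow_right (by norm_num) hh1
  have h2e : 2 * e < n := by omega
  have hnpos : 0 < n := by omega
  haveI : NeZero n := ⟨by omega⟩
  have hpow : (3:ℕ) ^ m ≡ 1 [MOD n] := by
    show 3 ^ m % n = 1 % n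
    rw [h3m, Nat.add_mod_left]
  have hcop : Nat.Coprime 3 n := by
    rw [Nat.Prime.coprime_iff_not_dvd Nat.prime_three]
    intro hdvd
    have h1 : (3:ℕ) ∣ 3 ^ m := dvd_pow_self 3 (by omega)
    have h2 : (3:ℕ) ∣ 3 ^ m - n := Nat.dvd_sub h1 hdvd
    rw [show 3 ^ m - n = 1 by omega] at h2
    exact absurd (Nat.le_of_dvd one_pos h2) (by norm_num)
  constructor
  · rintro ⟨s, hs⟩
    have hper1 := per_aux n m 1 s hpow
    rw [one_mul, one_mul] at hper1
    rw [one_mul] at hs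
    rw [hper1] at hs
    set r := s % m with hr
    have hrm : r < m := Nat.mod_lt s hmpos
    have h3r : 3 ^ r ≤ 3 ^ (m-1) := Nat.pow_le_pow_right (by norm_num) (by omega)
    have hlt : 3 ^ r < n := by omega
    rw [Nat.mod_eq_of_lt hlt] at hs
    rcases lt_or_ge r 3 with hr3 | hr3
    · have : (3:ℕ) ^ r ≤ 9 := by
        interval_cases r <;> norm_num
      omega
    · have hd1 : (27:ℕ) ∣ 3 ^ r := by
        calc (27:ℕ) = 3 ^ 3 := by norm_num
        _ ∣ 3 ^ r := pow_dvd_pow 3 hr3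
      have hd2 : (27:ℕ) ∣ 3 ^ h := by
        calc (27:ℕ) = 3 ^ 3 := by norm_num
        _ ∣ 3 ^ h := pow_dvd_pow 3 hh1
      have : (27:ℕ) ∣ 13 := by
        have := Nat.dvd_sub hd1 hd2
        rw [show 3 ^ r - 3 ^ h = 13 by omega] at this
        exact this
      omega
  · have hper : e * 3 ^ m % n = e % n := by
      have := Nat.ModEq.mul_left e hpow
      rw [mul_one] at this
      exact this
    have hinj : Set.InjOn (fun s => e * 3 ^ s % n) ↑(Finset.range m) := by
      intro s₁ hs₁ s₂ hs₂ heq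
      simp only [Finset.coe_range, Set.mem_Iio] at hs₁ hs₂
      by_contra hne
      have hdvd : n ∣ 2 * e := by
        rcases lt_or_gt_of_ne hne with hlt | hlt
        · exact key_aux n hcop e m s₁ s₂ hm hper hlt hs₂ heq
        · exact key_aux n hcop e m s₂ s₁ hm hper hlt hs₁ heq.symm
      have := Nat.le_of_dvd (by omega) hdvd
      omega
    have hset : cyclotomicCoset n e
        = ↑((Finset.range m).image (fun s => e * 3 ^ s % n)) := by
      ext j
      simp only [cyclotomicCoset, Set.mem_setOf_eq, Finset.coe_image,
        Finset.coe_range, Set.mem_image, Set.mem_Iio]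
      constructor
      · rintro ⟨s, rfl⟩
        exact ⟨s % m, Nat.mod_lt s hmpos, (per_aux n m e s hpow).symm⟩
      · rintro ⟨s, _, rfl⟩
        exact ⟨s, rfl⟩
    rw [hset, Set.ncard_coe_finset, Finset.card_image_of_injOn (by simpa using hinj),
      Finset.card_range]
end

section
/- Let m, e, n be positive integers with 1 ≤ e ≤ 3^m − 2 and 3^n · e ≡ 2 (mod 3^m − 1). Then e is even, gcd(e, 3^m − 1) = 2, e does not lie in the 3-cyclotomic coset C_1 of 1 modulo 3^m − 1, and the 3-cyclotomic coset C_e of e modulo 3^m − 1 has exactly m elements. -/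
theorem stmt6 (m e n : ℕ) (hm : 0 < m) (hn : 0 < n)
    (he1 : 1 ≤ e) (he2 : e ≤ 3 ^ m - 2)
    (hcong : 3 ^ n * e ≡ 2 [MOD 3 ^ m - 1]) :
    Even e ∧ Nat.gcd e (3 ^ m - 1) = 2 ∧
      e ∉ cyclotomicCoset (3 ^ m - 1) 1 ∧
      (cyclotomicCoset (3 ^ m - 1) e).ncard = m := by
  set N := 3 ^ m - 1 with hNdef
  have h3m : 3 ≤ 3 ^ m := by
    calc (3:ℕ) = 3 ^ 1 := by norm_num
    _ ≤ 3 ^ m := Nat.pow_le_pow_right (by norm_num) hm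
  have hN2 : 2 ≤ N := by omega
  have hodd : Odd (3 ^ m) := Odd.pow (⟨1, by norm_num⟩ : Odd 3)
  have hNeven : 2 ∣ N := by obtain ⟨k, hk⟩ := hodd; omega
  -- 3^m ≡ 1 mod N
  have hmod : (1 : ℕ) ≡ 3 ^ m [MOD N] :=
    (Nat.modEq_iff_dvd' (by omega)).mpr ⟨1, by omega⟩
  have hnm : (1 : ℕ) ≡ 3 ^ (m * n) [MOD N] := by
    have := hmod.pow n
    simpa [pow_mul, one_pow] using this
  -- e ≡ 2 * 3^k mod N for k := m*n - n
  set k := m * n - n with hkdef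
  have hkn : k + n = m * n := by
    have : n ≤ m * n := Nat.le_mul_of_pos_left n hm
    omega
  have he : e ≡ 2 * 3 ^ k [MOD N] := by
    have h1 : 3 ^ k * (3 ^ n * e) ≡ 3 ^ k * 2 [MOD N] := hcong.mul_left _
    have h2 : 3 ^ (m * n) * e = 3 ^ k * (3 ^ n * e) := by
      rw [← hkn, pow_add]; ring
    have h3 : e ≡ 3 ^ (m * n) * e [MOD N] := by
      have := hnm.mul_right e
      simpa using this
    calc e ≡ 3 ^ (m * n) * e [MOD N] := h3
    _ = 3 ^ k * (3 ^ n * e) := h2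
    _ ≡ 3 ^ k * 2 [MOD N] := h1
    _ = 2 * 3 ^ k := by ring
  -- Even e
  have heven : Even e := by
    have h2 : e ≡ 2 * 3 ^ k [MOD 2] := he.of_dvd hNeven
    have : e % 2 = (2 * 3 ^ k) % 2 := h2
    simp [Nat.mul_mod] at this
    exact Nat.even_iff.mpr this
  -- gcd e N = 2
  have hcop3 : Nat.Coprime 3 N := by
    refine (Nat.prime_three.coprime_iff_not_dvd).mpr ?_
    intro hd
    have h3p : (3:ℕ) ∣ 3 ^ m := dvd_pow_self 3 hm.ne'
    obtain ⟨a, ha⟩ := hd; obtain ⟨b, hb⟩ := h3p; omega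
  have hcop3k : Nat.Coprime (3 ^ k) N := Nat.Coprime.pow_left _ hcop3
  have heN : e < N := by omega
  have hgcd : Nat.gcd e N = 2 := by
    have h1 : Nat.gcd e N = Nat.gcd (2 * 3 ^ k) N := by
      have he' : e % N = (2 * 3 ^ k) % N := he
      rw [Nat.gcd_comm e N, Nat.gcd_rec N e, he', ← Nat.gcd_rec N (2 * 3 ^ k),
        Nat.gcd_comm N (2 * 3 ^ k)]
    rw [h1, Nat.Coprime.gcd_mul_right_cancel 2 hcop3k]
    exact Nat.gcd_eq_left hNeven
  -- e ∉ C_1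
  have hnotin : e ∉ cyclotomicCoset N 1 := by
    rintro ⟨s, hs⟩
    have h1 : e % 2 = 0 := Nat.even_iff.mp heven
    have h2 : e % 2 = 3 ^ s % 2 := by
      rw [hs, one_mul, Nat.mod_mod_of_dvd _ hNeven]
    have h3 : 3 ^ s % 2 = 1 := by
      rw [Nat.pow_mod]; norm_num
    omega
  -- key: no small period
  obtain ⟨M, hM⟩ := hNeven
  have heven' := heven
  obtain ⟨e', he'⟩ := heven'
  have he'2 : e = 2 * e' := by omega
  have hcopeM : Nat.Coprime e' M := by
    have : Nat.gcd (2 * e') (2 * M) = 2 := by rw [← he'2, ← hM]; exact hgcd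
    rw [Nat.gcd_mul_left] at this
    omega
  have key : ∀ d, 0 < d → d < m → ¬ (e ≡ e * 3 ^ d [MOD N]) := by
    intro d hd1 hd2 hmodeq
    have h3d : 1 ≤ 3 ^ d := Nat.one_le_pow _ _ (by norm_num)
    have h3d3 : 3 ≤ 3 ^ d := by
      calc (3:ℕ) = 3 ^ 1 := by norm_num
      _ ≤ 3 ^ d := Nat.pow_le_pow_right (by norm_num) hd1
    have hdvd : (N : ℤ) ∣ (e * 3 ^ d : ℕ) - (e : ℕ) := hmodeq.dvd
    obtain ⟨c, hc⟩ := hdvd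
    have hc' : (M : ℤ) * c = (e' : ℤ) * (3 ^ d - 1) := by
      have h2 : (2 : ℤ) * ((M : ℤ) * c) = 2 * ((e' : ℤ) * (3 ^ d - 1)) := by
        push_cast [hM, he'2] at hc ⊢
        linarith [hc]
      linarith
    have hdvdM : (M : ℤ) ∣ (e' : ℤ) * (3 ^ d - 1) := ⟨c, hc'.symm⟩
    have hdvdM' : M ∣ e' * (3 ^ d - 1) := by
      have : ((M : ℕ) : ℤ) ∣ ((e' * (3 ^ d - 1) : ℕ) : ℤ) := by
        push_cast [h3d]
        exact hdvdM
      exact_mod_cast this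
    have hdvd2 : M ∣ 3 ^ d - 1 := hcopeM.symm.dvd_of_dvd_mul_left hdvdM'
    have hMle : M ≤ 3 ^ d - 1 := Nat.le_of_dvd (by omega) hdvd2
    have hpow : 3 ^ (d + 1) ≤ 3 ^ m := Nat.pow_le_pow_right (by norm_num) (by omega)
    have hpow2 : 3 ^ (d + 1) = 3 * 3 ^ d := by rw [pow_succ]; ring
    omega
  -- ncard
  classical
  set f : ℕ → ℕ := fun s => e * 3 ^ s % N with hfdef
  have hset : cyclotomicCoset N e = ↑((Finset.range m).image f) := by
    ext j
    simp only [cyclotomicCoset, Set.mem_setOf_eq, Finset.coe_image, Set.mem_image,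
      Finset.mem_coe, Finset.mem_range]
    constructor
    · rintro ⟨s, rfl⟩
      refine ⟨s % m, Nat.mod_lt _ hm, ?_⟩
      have : e * 3 ^ (s % m) ≡ e * 3 ^ s [MOD N] := by
        have hs : 3 ^ s = 3 ^ (m * (s / m)) * 3 ^ (s % m) := by
          rw [← pow_add]
          congr 1
          exact (Nat.div_add_mod s m).symm
        have h1 : (1 : ℕ) ≡ 3 ^ (m * (s / m)) [MOD N] := by
          have := hmod.pow (s / m)
          simpa [pow_mul, one_pow] using this
        calc e * 3 ^ (s % m) = e * (1 * 3 ^ (s % m)) := by ring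
        _ ≡ e * (3 ^ (m * (s / m)) * 3 ^ (s % m)) [MOD N] :=
          ((h1.mul_right _).mul_left _)
        _ = e * 3 ^ s := by rw [← hs]
      exact this
    · rintro ⟨s, _, rfl⟩
      exact ⟨s, rfl⟩
  have hinj : Set.InjOn f ↑(Finset.range m) := by
    intro a ha b hb hab
    simp only [Finset.coe_range, Set.mem_Iio] at ha hb
    by_contra hne
    rcases Nat.lt_or_ge a b with hlt | hge
    · have hmeq : e * 3 ^ a ≡ e * 3 ^ b [MOD N] := hab
      have hb' : e * 3 ^ b = (e * 3 ^ (b - a)) * 3 ^ a := by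
        rw [mul_assoc, ← pow_add]
        congr 2
        omega
      have : e ≡ e * 3 ^ (b - a) [MOD N] := by
        have h1 : e * 3 ^ a ≡ (e * 3 ^ (b - a)) * 3 ^ a [MOD N] := by rw [← hb']; exact hmeq
        exact Nat.ModEq.cancel_right_of_coprime (by simpa [Nat.Coprime] using (Nat.Coprime.pow_left a hcop3).symm) h1
      exact key (b - a) (by omega) (by omega) this
    · have hlt : b < a := by omega
      have hmeq : e * 3 ^ b ≡ e * 3 ^ a [MOD N] := hab.symm
      have hb' : e * 3 ^ a = (e * 3 ^ (a - b)) * 3 ^ b := by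
        rw [mul_assoc, ← pow_add]
        congr 2
        omega
      have : e ≡ e * 3 ^ (a - b) [MOD N] := by
        have h1 : e * 3 ^ b ≡ (e * 3 ^ (a - b)) * 3 ^ b [MOD N] := by rw [← hb']; exact hmeq
        exact Nat.ModEq.cancel_right_of_coprime (by simpa [Nat.Coprime] using (Nat.Coprime.pow_left b hcop3).symm) h1
      exact key (a - b) (by omega) (by omega) this
  refine ⟨heven, hgcd, hnotin, ?_⟩
  rw [hset, Set.ncard_coe_finset, Finset.card_image_of_injOn hinj, Finset.card_range]
end

section
/- Let m, e, n be positive integers with 1 ≤ e ≤ 3^m − 2 and 3^n · e ≡ 2 (mod 3^m − 1). Then the equation (x+1)^e + x^e + 1 = 0 has the unique solution x = 1 in the finite field F_{3^m}; that is, for every x in F_{3^m}, (x+1)^e + x^e + 1 = 0 if and only if x = 1. -/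
theorem stmt7 (m e n : ℕ) (hm : 0 < m) (hn : 0 < n)
    (he1 : 1 ≤ e) (he2 : e ≤ 3 ^ m - 2)
    (hcong : 3 ^ n * e ≡ 2 [MOD 3 ^ m - 1]) :
    ∀ x : GaloisField 3 m, (x + 1) ^ e + x ^ e + 1 = 0 ↔ x = 1 := by
  haveI : Fact (Nat.Prime 3) := ⟨by norm_num⟩
  have h3 : (3 : GaloisField 3 m) = 0 := by
    exact_mod_cast CharP.cast_eq_zero (GaloisField 3 m) 3
  haveI : Fintype (GaloisField 3 m) := Fintype.ofFinite _
  have hcard : Fintype.card (GaloisField 3 m) = 3 ^ m := by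
    rw [← Nat.card_eq_fintype_card]; exact GaloisField.card 3 m hm.ne'
  have h3n : 3 ≤ 3 ^ n := by
    calc 3 = 3 ^ 1 := (pow_one 3).symm
    _ ≤ 3 ^ n := Nat.pow_le_pow_right (by norm_num) hn
  have h2le : 2 ≤ 3 ^ n * e := by nlinarith
  have hdvd : (3 ^ m - 1) ∣ 3 ^ n * e - 2 := (Nat.modEq_iff_dvd' h2le).mp hcong.symm
  have hoddm : Odd (3 ^ m) := Odd.pow ⟨1, rfl⟩
  have h3m : 3 ≤ 3 ^ m := by
    calc 3 = 3 ^ 1 := (pow_one 3).symm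
    _ ≤ 3 ^ m := Nat.pow_le_pow_right (by norm_num) hm
  have h2M : 2 ∣ 3 ^ m - 1 := by
    obtain ⟨c, hc⟩ := hoddm; omega
  have heven : Even e := by
    have h2d : 2 ∣ 3 ^ n * e - 2 := dvd_trans h2M hdvd
    have hpe : 2 ∣ 3 ^ n * e := by omega
    have hodd : Odd (3 ^ n) := Odd.pow ⟨1, rfl⟩
    rcases Nat.even_mul.mp (even_iff_two_dvd.mpr hpe) with h | h
    · exact absurd h (Nat.not_even_iff_odd.mpr hodd)
    · exact h
  obtain ⟨k, hk0⟩ := hdvd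
  have hk : 3 ^ n * e = 2 + (3 ^ m - 1) * k := by omega
  have key : ∀ y : GaloisField 3 m, y ≠ 0 → y ^ (3 ^ n * e) = y ^ 2 := by
    intro y hy
    have h1 : y ^ (3 ^ m - 1) = 1 := by
      rw [← hcard]; exact FiniteField.pow_card_sub_one_eq_one y hy
    rw [hk, pow_add, pow_mul, h1, one_pow, mul_one]
  intro x
  constructor
  · intro h
    by_cases hx0 : x = 0
    · exfalso
      rw [hx0, zero_add, one_pow, zero_pow (by omega : e ≠ 0), add_zero] at h
      exact one_ne_zero (by linear_combination h3 - h : (1 : GaloisField 3 m) = 0)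
    by_cases hx1 : x + 1 = 0
    · exfalso
      have hx : x = -1 := by linear_combination hx1
      rw [hx, neg_add_cancel, zero_pow (by omega : e ≠ 0), zero_add,
        heven.neg_one_pow] at h
      exact one_ne_zero (by linear_combination h3 - h : (1 : GaloisField 3 m) = 0)
    · have h2 : ((x + 1) ^ e + x ^ e + 1) ^ 3 ^ n = 0 := by
        rw [h]; exact zero_pow (by positivity)
      rw [add_pow_char_pow, add_pow_char_pow, one_pow, ← pow_mul, ← pow_mul,
        mul_comm e (3 ^ n), key _ hx1, key _ hx0] at h2
      have hq : (x - 1) ^ 2 = 0 := by linear_combination -h2 + (x ^ 2 + 1) * h3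
      exact sub_eq_zero.mp ((pow_eq_zero_iff two_ne_zero).mp hq)
  · intro h
    subst h
    have h2 : (1 + 1 : GaloisField 3 m) = -1 := by linear_combination h3
    rw [h2, one_pow, heven.neg_one_pow]
    linear_combination h3
end

section
/- Let m, e, n be positive integers with 1 ≤ e ≤ 3^m − 2 and 3^n · e ≡ 2 (mod 3^m − 1). Then the equation (x+1)^e − x^e − 1 = 0 has the unique solution x = 0 in the finite field F_{3^m}; that is, for every x in F_{3^m}, (x+1)^e − x^e − 1 = 0 if and only if x = 0. -/
theorem stmt8 (m e n : ℕ) (hm : 0 < m) (hn : 0 < n)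
    (he1 : 1 ≤ e) (he2 : e ≤ 3 ^ m - 2)
    (hcong : 3 ^ n * e ≡ 2 [MOD 3 ^ m - 1]) :
    ∀ x : GaloisField 3 m, (x + 1) ^ e - x ^ e - 1 = 0 ↔ x = 0 := by
  haveI : Fintype (GaloisField 3 m) := Fintype.ofFinite _
  have hcard : Fintype.card (GaloisField 3 m) = 3 ^ m := by rw [← Nat.card_eq_fintype_card]; exact GaloisField.card 3 m hm.ne'
  have h3 : ((3 : ℕ) : GaloisField 3 m) = 0 := CharP.cast_eq_zero _ 3
  have h2ne : (2 : GaloisField 3 m) ≠ 0 := by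
    intro h
    have : (1 : GaloisField 3 m) = 0 := by
      have h3' : (3 : GaloisField 3 m) = 0 := by exact_mod_cast h3
      linear_combination h3' - h
    exact one_ne_zero this
  have h2le : 2 ≤ 3 ^ n * e := by
    have h1 : 3 ≤ 3 ^ n := by
      calc 3 = 3 ^ 1 := by ring
      _ ≤ 3 ^ n := Nat.pow_le_pow_right (by norm_num) hn
    calc 2 ≤ 3 * 1 := by norm_num
    _ ≤ 3 ^ n * e := Nat.mul_le_mul h1 he1
  have hdvd : (3 ^ m - 1) ∣ (3 ^ n * e - 2) := (Nat.modEq_iff_dvd' h2le).mp hcong.symm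
  obtain ⟨k, hk⟩ := hdvd
  have key : ∀ a : GaloisField 3 m, a ≠ 0 → a ^ (3 ^ n * e) = a ^ 2 := by
    intro a ha
    have hone : a ^ (3 ^ m - 1) = 1 := by
      have := FiniteField.pow_card_sub_one_eq_one a ha
      rwa [hcard] at this
    have hx : 3 ^ n * e = 2 + (3 ^ m - 1) * k := by omega
    rw [hx, pow_add, pow_mul, hone, one_pow, mul_one]
  intro x
  constructor
  · intro hx
    by_contra hx0
    have hx1 : (x + 1) ^ e = x ^ e + 1 := by linear_combination hx
    have h2 : ((x + 1) ^ e) ^ (3 ^ n) = (x ^ e + 1) ^ (3 ^ n) := by rw [hx1]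
    have frob : (x ^ e + 1) ^ (3 ^ n) = (x ^ e) ^ (3 ^ n) + 1 := by
      have := add_pow_char_pow (R := GaloisField 3 m) (p := 3) (n := n) (x := x ^ e) (y := 1)
      simpa using this
    rw [frob, ← pow_mul, ← pow_mul, mul_comm e (3 ^ n), key x hx0] at h2
    by_cases hx1' : x + 1 = 0
    · rw [hx1', zero_pow (by positivity)] at h2
      have hxm : x = -1 := by linear_combination hx1'
      rw [hxm] at h2
      apply h2ne
      linear_combination -h2
    · rw [key (x + 1) hx1'] at h2
      have h2x : 2 * x = 0 := by linear_combination h2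
      rcases mul_eq_zero.mp h2x with h | h
      · exact h2ne h
      · exact hx0 h
  · intro h
    subst h
    simp [zero_pow (show e ≠ 0 by omega), sub_self]
end

section
/- Let m, e, n be positive integers with 1 ≤ e ≤ 3^m − 2 and 3^n · e ≡ 2 (mod 3^m − 1). Then the ternary cyclic code C_{(1,e)} has parameters [3^m − 1, 3^m − 1 − 2m, 4]; that is, its F_3-dimension equals 3^m − 1 − 2m, every nonzero codeword has Hamming weight at least 4, and there exists a nonzero codeword of Hamming weight exactly 4. -/
/-- The parity-check linear map `c ↦ ∑ i, c i • α ^ (v * i)` on `F₃^(3^m - 1)`. -/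
noncomputable def parityMap (m v : ℕ) (α : GaloisField 3 m) :
    (Fin (3 ^ m - 1) → ZMod 3) →ₗ[ZMod 3] GaloisField 3 m where
  toFun c := ∑ i, c i • α ^ (v * (i : ℕ))
  map_add' x y := by simp [add_smul, Finset.sum_add_distrib]
  map_smul' r x := by simp [smul_smul, Finset.smul_sum]

/-- The ternary cyclic code `C_{(1,e)}`: all vectors `c ∈ F₃^(3^m-1)` with
`∑ i, c i • α ^ i = 0` and `∑ i, c i • α ^ (e * i) = 0`. -/
noncomputable def ternaryCyclicCode (m e : ℕ) (α : GaloisField 3 m) :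
    Submodule (ZMod 3) (Fin (3 ^ m - 1) → ZMod 3) :=
  LinearMap.ker (parityMap m 1 α) ⊓ LinearMap.ker (parityMap m e α)

lemma order_of_gen (m : ℕ) (hm : 0 < m) (α : (GaloisField 3 m)ˣ)
    (hα : ∀ u : (GaloisField 3 m)ˣ, u ∈ Subgroup.zpowers α) :
    orderOf α = 3 ^ m - 1 := by
  rw [orderOf_eq_card_of_forall_mem_zpowers hα, Nat.card_units, GaloisField.card 3 m hm.ne']

lemma parityMap_apply (m v : ℕ) (α : GaloisField 3 m) (c : Fin (3 ^ m - 1) → ZMod 3) :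
    parityMap m v α c = ∑ i, c i • α ^ (v * (i : ℕ)) := rfl

lemma parityMap_single (m v : ℕ) (α : GaloisField 3 m) (i : Fin (3 ^ m - 1)) (r : ZMod 3) :
    parityMap m v α (Pi.single i r) = r • α ^ (v * (i : ℕ)) := by
  rw [parityMap_apply]
  rw [Finset.sum_eq_single i]
  · simp
  · intro b _ hb; simp [Pi.single_eq_of_ne hb]
  · simp

lemma ker_frob (m e n : ℕ) (hm : 0 < m) (hn : 0 < n)
    (hcong : 3 ^ n * e ≡ 2 [MOD 3 ^ m - 1])
    (α : (GaloisField 3 m)ˣ) (horder : orderOf α = 3 ^ m - 1) :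
    LinearMap.ker (parityMap m e (α : GaloisField 3 m))
      = LinearMap.ker (parityMap m 2 (α : GaloisField 3 m)) := by
  ext c
  simp only [LinearMap.mem_ker]
  have hpow : (parityMap m e (α : GaloisField 3 m) c) ^ (3 ^ n)
      = parityMap m 2 (α : GaloisField 3 m) c := by
    rw [parityMap_apply, parityMap_apply,
      ← iterateFrobenius_def (R := GaloisField 3 m) (p := 3), map_sum]
    refine Finset.sum_congr rfl fun i _ => ?_
    rw [iterateFrobenius_def, Algebra.smul_def, mul_pow, ← map_pow, ZMod.pow_card_pow,
      ← Algebra.smul_def]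
    congr 1
    have key : (α : (GaloisField 3 m)ˣ) ^ (e * (i : ℕ) * 3 ^ n) = α ^ (2 * (i : ℕ)) := by
      rw [pow_eq_pow_iff_modEq, horder]
      calc e * (i : ℕ) * 3 ^ n = 3 ^ n * e * (i : ℕ) := by ring
      _ ≡ 2 * (i : ℕ) [MOD 3 ^ m - 1] := hcong.mul_right _
    calc ((α : GaloisField 3 m) ^ (e * (i:ℕ))) ^ 3 ^ n
        = (α : GaloisField 3 m) ^ (e * (i:ℕ) * 3 ^ n) := by rw [← pow_mul]
      _ = ((α ^ (e * (i:ℕ) * 3 ^ n) : (GaloisField 3 m)ˣ) : GaloisField 3 m) := by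
          rw [Units.val_pow_eq_pow_val]
      _ = ((α ^ (2 * (i:ℕ)) : (GaloisField 3 m)ˣ) : GaloisField 3 m) := by rw [key]
      _ = (α : GaloisField 3 m) ^ (2 * (i:ℕ)) := by rw [Units.val_pow_eq_pow_val]
  constructor
  · intro h; rw [← hpow, h, zero_pow (by positivity)]
  · intro h
    have := hpow.symm ▸ h
    exact pow_eq_zero_iff (by positivity) |>.mp this

section Dim
variable (m : ℕ)

lemma exists_pow_eq (hm : 0 < m) (α : (GaloisField 3 m)ˣ)
    (hα : ∀ u : (GaloisField 3 m)ˣ, u ∈ Subgroup.zpowers α)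
    (horder : orderOf α = 3 ^ m - 1) (x : GaloisField 3 m) (hx : x ≠ 0) :
    ∃ i : Fin (3 ^ m - 1), (α : GaloisField 3 m) ^ (i : ℕ) = x := by
  have hN : 0 < 3 ^ m - 1 := by
    have : (3:ℕ) ^ 1 ≤ 3 ^ m := Nat.pow_le_pow_right (by norm_num) hm
    omega
  obtain ⟨k, hk⟩ := Subgroup.mem_zpowers_iff.mp (hα (Units.mk0 x hx))
  have hk' : α ^ ((k % (3 ^ m - 1 : ℕ) : ℤ).toNat) = Units.mk0 x hx := by
    rw [← zpow_natCast, Int.toNat_of_nonneg (Int.emod_nonneg _ (by exact_mod_cast hN.ne')),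
      ← horder, zpow_mod_orderOf, hk]
  refine ⟨⟨(k % (3 ^ m - 1 : ℕ) : ℤ).toNat, ?_⟩, ?_⟩
  · have := Int.emod_lt_of_pos k (b := (3 ^ m - 1 : ℕ)) (by exact_mod_cast hN)
    omega
  · have := congrArg (Units.val) hk'
    simpa using this

lemma pow_inj' (α : (GaloisField 3 m)ˣ) (horder : orderOf α = 3 ^ m - 1)
    (i j : Fin (3 ^ m - 1)) (h : (α : GaloisField 3 m) ^ (i : ℕ) = (α : GaloisField 3 m) ^ (j : ℕ)) :
    i = j := by
  have hu : α ^ (i : ℕ) = α ^ (j : ℕ) := Units.ext (by simpa using h)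
  have := pow_injOn_Iio_orderOf (x := α) (by rw [horder]; exact i.2) (by rw [horder]; exact j.2) hu
  exact Fin.ext this

lemma char3 : (3 : GaloisField 3 m) = 0 := by
  have : CharP (GaloisField 3 m) 3 := inferInstance
  exact_mod_cast CharP.cast_eq_zero (GaloisField 3 m) 3

lemma range_pair (hm : 0 < m) (α : (GaloisField 3 m)ˣ)
    (hα : ∀ u : (GaloisField 3 m)ˣ, u ∈ Subgroup.zpowers α)
    (horder : orderOf α = 3 ^ m - 1) (x : GaloisField 3 m) :
    (x, x ^ 2) ∈ LinearMap.range
      ((parityMap m 1 (α : GaloisField 3 m)).prod (parityMap m 2 (α : GaloisField 3 m))) := by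
  rcases eq_or_ne x 0 with rfl | hx
  · exact LinearMap.mem_range.mpr ⟨0, by simp⟩
  · obtain ⟨i, hi⟩ := exists_pow_eq m hm α hα horder x hx
    exact ⟨Pi.single i 1, by
      simp [LinearMap.prod_apply, parityMap_single, ← hi, one_mul, pow_mul, ← pow_mul,
        mul_comm 2 (i:ℕ)]⟩

lemma range_top (hm : 0 < m) (α : (GaloisField 3 m)ˣ)
    (hα : ∀ u : (GaloisField 3 m)ˣ, u ∈ Subgroup.zpowers α)
    (horder : orderOf α = 3 ^ m - 1) :
    LinearMap.range
      ((parityMap m 1 (α : GaloisField 3 m)).prod (parityMap m 2 (α : GaloisField 3 m))) = ⊤ := by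
  set H := (parityMap m 1 (α : GaloisField 3 m)).prod (parityMap m 2 (α : GaloisField 3 m))
  rw [eq_top_iff]
  rintro ⟨a, b⟩ -
  have h1 := range_pair m hm α hα horder a
  have h2 := range_pair m hm α hα horder (b - a ^ 2)
  have h3 := range_pair m hm α hα horder 1
  have h4 := range_pair m hm α hα horder (b - a ^ 2 + 1)
  have : (a, b) = ((a, a^2) + (b - a^2, (b-a^2)^2) + (1, 1^2)) - (b - a^2 + 1, (b - a^2 + 1)^2) :=
    by
      have h3 := char3 m
      apply Prod.ext
      · simp
      · simp only [Prod.snd_sub, Prod.snd_add]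
        linear_combination (b - a ^ 2) * h3
  rw [this]
  exact Submodule.sub_mem _ (Submodule.add_mem _ (Submodule.add_mem _ h1 h2) h3) h4

lemma dim_lemma (hm : 0 < m) (α : (GaloisField 3 m)ˣ)
    (hα : ∀ u : (GaloisField 3 m)ˣ, u ∈ Subgroup.zpowers α)
    (horder : orderOf α = 3 ^ m - 1) :
    Module.finrank (ZMod 3) (ternaryCyclicCode m 2 (α : GaloisField 3 m)) = 3 ^ m - 1 - 2 * m := by
  set H := (parityMap m 1 (α : GaloisField 3 m)).prod (parityMap m 2 (α : GaloisField 3 m))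
  have hker : LinearMap.ker H = ternaryCyclicCode m 2 (α : GaloisField 3 m) :=
    LinearMap.ker_prod _ _
  have hrn := LinearMap.finrank_range_add_finrank_ker H
  rw [range_top m hm α hα horder, finrank_top, hker] at hrn
  have h1 : Module.finrank (ZMod 3) (Fin (3 ^ m - 1) → ZMod 3) = 3 ^ m - 1 := by
    simp [Module.finrank_pi]
  have h2 : Module.finrank (ZMod 3) (GaloisField 3 m × GaloisField 3 m) = 2 * m := by
    rw [Module.finrank_prod, GaloisField.finrank 3 hm.ne']
    ring
  rw [h1, h2] at hrn
  omega

lemma zmod3_cases : ∀ a : ZMod 3, a ≠ 0 → a = 1 ∨ a = 2 := by decide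

lemma smul_two {M : Type*} [AddCommGroup M] [Module (ZMod 3) M] (x : M) :
    (2 : ZMod 3) • x = -x := by
  rw [show (2 : ZMod 3) = -1 by decide, neg_one_smul]

section Helpers
variable {F : Type*} [Field F]

lemma helper2 (hchar : (3 : F) = 0) (x y : F) (h1 : x + y = 0) (h2 : x ^ 2 + y ^ 2 = 0) (hy : y ≠ 0) : False := by
  have h : y * y = 0 := by linear_combination (2*y - 2*x) * h1 + 2 * h2 - y^2 * hchar
  exact hy (by simpa [mul_self_eq_zero] using h)

lemma helper3a (hchar : (3 : F) = 0) (x y z : F) (h1 : x + y + z = 0) (h2 : x ^ 2 + y ^ 2 + z ^ 2 = 0)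
    (hxy : x ≠ y) : False := by
  apply hxy
  have h : (x - y) ^ 2 = 0 := by
    linear_combination -h2 - (x + y - z) * h1 + (x^2 + y^2) * hchar
  exact sub_eq_zero.mp (by simpa using sq_eq_zero_iff.mp h)

lemma helper3b (hchar : (3 : F) = 0) (x y z : F) (h1 : x + y - z = 0) (h2 : x ^ 2 + y ^ 2 - z ^ 2 = 0)
    (hx : x ≠ 0) (hy : y ≠ 0) : False := by
  have h : x * y = 0 := by
    linear_combination 2 * (x + y + z) * h1 - 2 * h2 - (x * y) * hchar
  rcases mul_eq_zero.mp h with h' | h'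
  exacts [hx h', hy h']

end Helpers

lemma sum_support (m v : ℕ) (α : GaloisField 3 m) (c : Fin (3 ^ m - 1) → ZMod 3) :
    ∑ i ∈ Finset.filter (fun i => c i ≠ 0) Finset.univ, c i • α ^ (v * (i : ℕ))
      = parityMap m v α c := by
  rw [parityMap_apply]
  exact Finset.sum_filter_of_ne (fun x _ h => by
    intro h0; exact h (by rw [h0, zero_smul]))

lemma min_weight (m : ℕ) (hm : 0 < m) (α : (GaloisField 3 m)ˣ)
    (horder : orderOf α = 3 ^ m - 1) :
    ∀ c ∈ ternaryCyclicCode m 2 (α : GaloisField 3 m), c ≠ 0 → 4 ≤ hammingNorm c := by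
  intro c hc hc0
  by_contra hlt
  push_neg at hlt
  have hchar := char3 m
  obtain ⟨hk1, hk2⟩ : parityMap m 1 (α : GaloisField 3 m) c = 0 ∧
      parityMap m 2 (α : GaloisField 3 m) c = 0 := by
    have h1 := hc
    rw [ternaryCyclicCode, Submodule.mem_inf, LinearMap.mem_ker, LinearMap.mem_ker] at h1
    exact h1
  set S := Finset.filter (fun i => c i ≠ 0) Finset.univ with hS
  have h1 : ∑ i ∈ S, c i • (α : GaloisField 3 m) ^ (1 * (i : ℕ)) = 0 := by
    rw [hS, sum_support]; exact hk1
  have h2 : ∑ i ∈ S, c i • (α : GaloisField 3 m) ^ (2 * (i : ℕ)) = 0 := by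
    rw [hS, sum_support]; exact hk2
  simp only [one_mul] at h1
  have e2 : ∀ i : Fin (3 ^ m - 1), (α : GaloisField 3 m) ^ (2 * (i : ℕ))
      = ((α : GaloisField 3 m) ^ (i : ℕ)) ^ 2 := fun i => by rw [mul_comm, pow_mul]
  simp only [e2] at h2
  have hmem : ∀ i, i ∈ S ↔ c i ≠ 0 := fun i => by simp [hS]
  have hcard : S.card = hammingNorm c := rfl
  have hne : S.Nonempty := by
    obtain ⟨i, hi⟩ := Function.ne_iff.mp hc0
    exact ⟨i, (hmem i).mpr (by simpa using hi)⟩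
  have hxne : ∀ i : Fin (3 ^ m - 1), (α : GaloisField 3 m) ^ (i : ℕ) ≠ 0 := fun i =>
    pow_ne_zero _ (Units.ne_zero α)
  have hxinj : ∀ i j : Fin (3 ^ m - 1), i ≠ j →
      (α : GaloisField 3 m) ^ (i : ℕ) ≠ (α : GaloisField 3 m) ^ (j : ℕ) := fun i j hij h =>
    hij (pow_inj' m α horder i j h)
  have hcards : S.card = 1 ∨ S.card = 2 ∨ S.card = 3 := by
    have := Finset.card_pos.mpr hne
    omega
  rcases hcards with h | h | h
  · obtain ⟨i, hSi⟩ := Finset.card_eq_one.mp h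
    rw [hSi, Finset.sum_singleton] at h1
    have hci : c i ≠ 0 := (hmem i).mp (hSi ▸ Finset.mem_singleton_self i)
    exact hxne i (by
      rcases smul_eq_zero.mp h1 with h' | h'
      · exact absurd h' hci
      · exact h')
  · obtain ⟨i, j, hij, hSij⟩ := Finset.card_eq_two.mp h
    rw [hSij, Finset.sum_pair hij] at h1 h2
    have hci : c i ≠ 0 := (hmem i).mp (hSij ▸ by simp)
    have hcj : c j ≠ 0 := (hmem j).mp (hSij ▸ by simp)
    set x := (α : GaloisField 3 m) ^ (i : ℕ)
    set y := (α : GaloisField 3 m) ^ (j : ℕ)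
    have hxy : x ≠ y := hxinj i j hij
    rcases zmod3_cases _ hci with hi' | hi' <;> rcases zmod3_cases _ hcj with hj' | hj' <;>
      rw [hi', hj'] at h1 h2 <;> simp only [one_smul, smul_two] at h1 h2
    · exact helper2 hchar x y h1 h2 (hxne j)
    · exact hxy (by linear_combination h1)
    · exact hxy (by linear_combination -h1)
    · exact helper2 hchar x y (by linear_combination -h1) (by linear_combination -h2) (hxne j)
  · obtain ⟨i, j, k, hij, hik, hjk, hSijk⟩ := Finset.card_eq_three.mp h
    rw [hSijk] at h1 h2
    rw [Finset.sum_insert (by simp [hij, hik]), Finset.sum_insert (by simp [hjk]),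
      Finset.sum_singleton] at h1 h2
    have hci : c i ≠ 0 := (hmem i).mp (hSijk ▸ by simp)
    have hcj : c j ≠ 0 := (hmem j).mp (hSijk ▸ by simp)
    have hck : c k ≠ 0 := (hmem k).mp (hSijk ▸ by simp)
    set x := (α : GaloisField 3 m) ^ (i : ℕ)
    set y := (α : GaloisField 3 m) ^ (j : ℕ)
    set z := (α : GaloisField 3 m) ^ (k : ℕ)
    have hxy : x ≠ y := hxinj i j hij
    have hxz : x ≠ z := hxinj i k hik
    have hyz : y ≠ z := hxinj j k hjk
    rcases zmod3_cases _ hci with hi' | hi' <;> rcases zmod3_cases _ hcj with hj' | hj' <;>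
      rcases zmod3_cases _ hck with hk' | hk' <;>
      rw [hi', hj', hk'] at h1 h2 <;> simp only [one_smul, smul_two] at h1 h2
    · exact helper3a hchar x y z (by linear_combination h1) (by linear_combination h2) hxy
    · exact helper3b hchar x y z (by linear_combination h1) (by linear_combination h2)
        (hxne i) (hxne j)
    · exact helper3b hchar x z y (by linear_combination h1) (by linear_combination h2)
        (hxne i) (hxne k)
    · exact helper3b hchar y z x (by linear_combination -h1) (by linear_combination -h2)
        (hxne j) (hxne k)
    · exact helper3b hchar y z x (by linear_combination h1) (by linear_combination h2)
        (hxne j) (hxne k)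
    · exact helper3b hchar x z y (by linear_combination -h1) (by linear_combination -h2)
        (hxne i) (hxne k)
    · exact helper3b hchar x y z (by linear_combination -h1) (by linear_combination -h2)
        (hxne i) (hxne j)
    · exact helper3a hchar x y z (by linear_combination -h1) (by linear_combination -h2) hxy

lemma exists_w4 (m : ℕ) (hm : 2 ≤ m) (α : (GaloisField 3 m)ˣ)
    (hα : ∀ u : (GaloisField 3 m)ˣ, u ∈ Subgroup.zpowers α)
    (horder : orderOf α = 3 ^ m - 1) :
    ∃ c ∈ ternaryCyclicCode m 2 (α : GaloisField 3 m), c ≠ 0 ∧ hammingNorm c = 4 := by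
  classical
  have hchar := char3 m
  have hm0 : 0 < m := by omega
  -- find y0 ∉ {0, 1, -1}
  obtain ⟨y0, hy0, hy1, hym1⟩ : ∃ y0 : GaloisField 3 m, y0 ≠ 0 ∧ y0 ≠ 1 ∧ y0 ≠ -1 := by
    by_contra hcon
    push_neg at hcon
    have : Fintype (GaloisField 3 m) := Fintype.ofFinite _
    have hsub : (Finset.univ : Finset (GaloisField 3 m)) ⊆ {0, 1, -1} := by
      intro y _
      rcases eq_or_ne y 0 with h | h
      · simp [h]
      rcases eq_or_ne y 1 with h' | h'
      · simp [h']
      · simp [hcon y h h']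
    have hcard := Finset.card_le_card hsub
    rw [Finset.card_univ, ← Nat.card_eq_fintype_card, GaloisField.card 3 m hm0.ne'] at hcard
    have h3 : Finset.card ({0, 1, -1} : Finset (GaloisField 3 m)) ≤ 3 := by
      apply le_trans (Finset.card_insert_le _ _)
      exact Nat.succ_le_succ (le_trans (Finset.card_insert_le _ _) (by simp))
    have h9 : (3:ℕ) ^ 2 ≤ 3 ^ m := Nat.pow_le_pow_right (by norm_num) hm
    omega
  have h1y0 : (1 : GaloisField 3 m) + y0 ≠ 0 := by
    intro h; exact hym1 (by linear_combination h)
  set x3 : GaloisField 3 m := -y0 / (1 + y0) with hx3def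
  have hx3 : x3 * (1 + y0) = -y0 := div_mul_cancel₀ _ h1y0
  -- all the distinctness facts
  have f30 : x3 ≠ 0 := by
    intro h; rw [h, zero_mul] at hx3; exact hy0 (by linear_combination hx3)
  have f13 : (1 : GaloisField 3 m) ≠ x3 := by
    intro h; rw [← h] at hx3; exact hy1 (by linear_combination 2*hx3 - (y0+1)*hchar)
  have f23 : y0 ≠ x3 := by
    intro h; rw [← h] at hx3
    have hfac : y0 * (y0 - 1) = 0 := by linear_combination hx3 - y0*hchar
    rcases mul_eq_zero.mp hfac with h' | h'
    · exact hy0 h'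
    · exact hy1 (sub_eq_zero.mp h')
  have f40 : 1 + y0 + x3 ≠ 0 := by
    intro h
    have hfac : (y0 - 1) * (y0 - 1) = 0 := by linear_combination (1+y0)*h - hx3 - y0*hchar
    rcases mul_eq_zero.mp hfac with h' | h' <;> exact hy1 (sub_eq_zero.mp h')
  have f41 : 1 + y0 + x3 ≠ 1 := by
    intro h
    have h' : x3 = -y0 := by linear_combination h
    rw [h'] at hx3
    have : y0 * y0 = 0 := by linear_combination -hx3
    rcases mul_eq_zero.mp this with h'' | h'' <;> exact hy0 h''
  have f42 : 1 + y0 + x3 ≠ y0 := by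
    intro h
    have h' : x3 = -1 := by linear_combination h
    rw [h'] at hx3
    exact one_ne_zero (α := GaloisField 3 m) (by linear_combination -hx3)
  have f43 : 1 + y0 + x3 ≠ x3 := fun h => h1y0 (by linear_combination h)
  have f12 : (1 : GaloisField 3 m) ≠ y0 := fun h => hy1 h.symm
  -- indices
  obtain ⟨i1, hi1⟩ := exists_pow_eq m hm0 α hα horder 1 one_ne_zero
  obtain ⟨i2, hi2⟩ := exists_pow_eq m hm0 α hα horder y0 hy0
  obtain ⟨i3, hi3⟩ := exists_pow_eq m hm0 α hα horder x3 f30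
  obtain ⟨i4, hi4⟩ := exists_pow_eq m hm0 α hα horder (1 + y0 + x3) f40
  have hi12 : i1 ≠ i2 := by intro h; apply f12; rw [← hi1, ← hi2, h]
  have hi13 : i1 ≠ i3 := by intro h; apply f13; rw [← hi1, ← hi3, h]
  have hi14 : i1 ≠ i4 := by intro h; apply f41; rw [← hi4, ← hi1, h]
  have hi23 : i2 ≠ i3 := by intro h; apply f23; rw [← hi2, ← hi3, h]
  have hi24 : i2 ≠ i4 := by intro h; apply f42; rw [← hi4, ← hi2, h]
  have hi34 : i3 ≠ i4 := by intro h; apply f43; rw [← hi4, ← hi3, h]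
  set c : Fin (3 ^ m - 1) → ZMod 3 :=
    Pi.single i1 1 + Pi.single i2 1 + Pi.single i3 1 + Pi.single i4 2 with hcdef
  have e2 : ∀ i : Fin (3 ^ m - 1), (α : GaloisField 3 m) ^ (2 * (i : ℕ))
      = ((α : GaloisField 3 m) ^ (i : ℕ)) ^ 2 := fun i => by rw [mul_comm, pow_mul]
  refine ⟨c, ?_, ?_, ?_⟩
  · rw [ternaryCyclicCode, Submodule.mem_inf, LinearMap.mem_ker, LinearMap.mem_ker]
    constructor
    · rw [hcdef]
      simp only [map_add, parityMap_single, one_mul, one_smul, smul_two, hi1, hi2, hi3, hi4]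
      ring
    · rw [hcdef]
      simp only [map_add, parityMap_single, one_smul, smul_two, e2, hi1, hi2, hi3, hi4]
      linear_combination -2*hx3
  · intro h
    have : c i1 = 0 := by rw [h]; rfl
    rw [hcdef] at this
    simp [Pi.single_eq_of_ne hi12, Pi.single_eq_of_ne hi13,
      Pi.single_eq_of_ne hi14] at this
  · have hsupp : Finset.filter (fun i => c i ≠ 0) Finset.univ = {i1, i2, i3, i4} := by
      ext a
      simp only [Finset.mem_filter, Finset.mem_univ, true_and, Finset.mem_insert,
        Finset.mem_singleton]
      constructor
      · intro h
        by_contra hn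
        push_neg at hn
        obtain ⟨n1, n2, n3, n4⟩ := hn
        apply h
        rw [hcdef]
        simp [Pi.single_eq_of_ne n1, Pi.single_eq_of_ne n2, Pi.single_eq_of_ne n3,
          Pi.single_eq_of_ne n4]
      · rintro (rfl | rfl | rfl | rfl) <;> rw [hcdef] <;>
          simp [Pi.single_eq_of_ne, hi12, hi13, hi14, hi23, hi24, hi34,
            Ne.symm hi12, Ne.symm hi13, Ne.symm hi14, Ne.symm hi23, Ne.symm hi24, Ne.symm hi34,
            show (2 : ZMod 3) ≠ 0 by decide]
    have : hammingNorm c = ({i1, i2, i3, i4} : Finset _).card := by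
      rw [← hsupp]; rfl
    rw [this]
    rw [Finset.card_insert_of_notMem (by simp [hi12, hi13, hi14]),
      Finset.card_insert_of_notMem (by simp [hi23, hi24]),
      Finset.card_insert_of_notMem (by simp [hi34]), Finset.card_singleton]

theorem stmt9 (m e n : ℕ) (hm : 0 < m) (hn : 0 < n)
    (he1 : 1 ≤ e) (he2 : e ≤ 3 ^ m - 2)
    (hcong : 3 ^ n * e ≡ 2 [MOD 3 ^ m - 1])
    (α : (GaloisField 3 m)ˣ) (hα : ∀ u : (GaloisField 3 m)ˣ, u ∈ Subgroup.zpowers α) :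
    Module.finrank (ZMod 3) (ternaryCyclicCode m e (α : GaloisField 3 m))
        = 3 ^ m - 1 - 2 * m ∧
      (∀ c ∈ ternaryCyclicCode m e (α : GaloisField 3 m), c ≠ 0 → 4 ≤ hammingNorm c) ∧
      (∃ c ∈ ternaryCyclicCode m e (α : GaloisField 3 m), c ≠ 0 ∧ hammingNorm c = 4) := by
  have hm2 : 2 ≤ m := by
    by_contra hlt
    have hm1 : m = 1 := by omega
    subst hm1
    have he : e = 1 := by omega
    subst he
    have h1 : 3 ^ n * 1 % (3 ^ 1 - 1) = 2 % (3 ^ 1 - 1) := hcong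
    have h2 : 3 ^ n % 2 = 1 := by rw [Nat.pow_mod]; norm_num
    norm_num at h1
    omega
  have horder : orderOf α = 3 ^ m - 1 := order_of_gen m hm α hα
  have hcode : ternaryCyclicCode m e (α : GaloisField 3 m)
      = ternaryCyclicCode m 2 (α : GaloisField 3 m) := by
    rw [ternaryCyclicCode, ternaryCyclicCode, ker_frob m e n hm hn hcong α horder]
  rw [hcode]
  exact ⟨dim_lemma m hm α hα horder, min_weight m hm α horder, exists_w4 m hm2 α hα horder⟩
end Dim
end

section
/- Let m, e, n be positive integers with m > 2, 1 ≤ e ≤ 3^m − 2, and 3^n · e ≡ 4 (mod 3^m − 1). Then e does not lie in the 3-cyclotomic coset C_1 of 1 modulo 3^m − 1, and the 3-cyclotomic coset C_e of e modulo 3^m − 1 has exactly m elements. -/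
lemma pow3m_mod (m : ℕ) : (3:ℕ)^m ≡ 1 [MOD 3^m - 1] :=
  ((Nat.modEq_iff_dvd' (Nat.one_le_pow _ _ (by norm_num))).mpr dvd_rfl).symm

lemma pow3_reduce (m : ℕ) (s : ℕ) :
    (3:ℕ)^s ≡ 3^(s % m) [MOD 3^m - 1] := by
  conv_lhs => rw [← Nat.div_add_mod s m, pow_add, pow_mul]
  calc ((3:ℕ)^m)^(s/m) * 3^(s%m)
      ≡ 1^(s/m) * 3^(s%m) [MOD 3^m-1] := ((pow3m_mod m).pow _).mul_right _
    _ = 3^(s%m) := by rw [one_pow, one_mul]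

lemma period_mult (N e d : ℕ) (h : e * 3^d ≡ e [MOD N]) :
    ∀ k, e * 3^(d*k) ≡ e [MOD N] := by
  intro k
  induction k with
  | zero => simpa using Nat.ModEq.refl e
  | succ k ih =>
      have heq : e * 3^(d*(k+1)) = (e * 3^(d*k)) * 3^d := by ring
      rw [heq]
      calc (e * 3^(d*k)) * 3^d ≡ e * 3^d [MOD N] := ih.mul_right _
        _ ≡ e [MOD N] := h

lemma period_gcd (N e : ℕ) : ∀ a b, e * 3^a ≡ e [MOD N] → e * 3^b ≡ e [MOD N] →
    e * 3^(Nat.gcd a b) ≡ e [MOD N] := by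
  intro a b
  induction a, b using Nat.gcd.induction with
  | H0 b => intro _ hb; simpa using hb
  | H1 a b ha ih =>
      intro h1 h2
      rw [Nat.gcd_rec]
      refine ih ?_ h1
      have : e * 3^b ≡ e * 3^(b % a) [MOD N] := by
        conv_lhs => rw [← Nat.div_add_mod b a, pow_add, ← mul_assoc]
        exact (period_mult N e a h1 (b/a)).mul_right _
      exact this.symm.trans h2

theorem stmt10 (m e n : ℕ) (hm : 2 < m) (hn : 0 < n)
    (he1 : 1 ≤ e) (he2 : e ≤ 3 ^ m - 2)
    (hcong : 3 ^ n * e ≡ 4 [MOD 3 ^ m - 1]) :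
    e ∉ cyclotomicCoset (3 ^ m - 1) 1 ∧
      (cyclotomicCoset (3 ^ m - 1) e).ncard = m := by
  set N := 3^m - 1 with hNdef
  have hm0 : 0 < m := by omega
  have h3m : 27 ≤ 3^m := by
    calc (27:ℕ) = 3^3 := by norm_num
      _ ≤ 3^m := Nat.pow_le_pow_right (by norm_num) hm
  have hN26 : 26 ≤ N := by omega
  have hNM : N + 1 = 3^m := by omega
  -- powers of 3 below m are < N
  have hpowlt : ∀ t, t < m → 3^t < N := by
    intro t ht
    have h1 : (3:ℕ)^t ≤ 3^(m-1) := Nat.pow_le_pow_right (by norm_num) (by omega)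
    have h2 : 3 * 3^(m-1) = 3^m := by
      rw [← pow_succ']
      congr 1; omega
    have h3 : 1 ≤ (3:ℕ)^(m-1) := Nat.one_le_pow _ _ (by norm_num)
    omega
  -- no period smaller than m
  have noper : ∀ d, 0 < d → d < m → ¬ (e * 3^d ≡ e [MOD N]) := by
    intro d hd0 hdm hper
    set g := Nat.gcd d m with hg
    have hgm : g ∣ m := Nat.gcd_dvd_right d m
    have hg0 : 0 < g := Nat.gcd_pos_of_pos_left _ hd0
    have hgd : g ≤ d := Nat.le_of_dvd hd0 (Nat.gcd_dvd_left d m)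
    have h2g : 2 * g ≤ m := by
      rcases hgm with ⟨c, hc⟩
      have hc2 : 2 ≤ c := by
        rcases Nat.lt_or_ge c 2 with h | h
        · interval_cases c <;> omega
        · exact h
      nlinarith
    have hem : e * 3^m ≡ e [MOD N] := by
      calc e * 3^m ≡ e * 1 [MOD N] := (pow3m_mod m).mul_left e
        _ = e := mul_one e
    have hper_g : e * 3^g ≡ e [MOD N] := period_gcd N e d m hper hem
    have h4 : 4 * 3^g ≡ 4 [MOD N] := by
      calc 4 * 3^g ≡ (3^n * e) * 3^g [MOD N] := hcong.symm.mul_right _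
        _ = 3^n * (e * 3^g) := by ring
        _ ≡ 3^n * e [MOD N] := hper_g.mul_left _
        _ ≡ 4 [MOD N] := hcong
    have h34 : 4 ≤ 4 * 3^g := by
      have := Nat.one_le_pow g 3 (by norm_num); omega
    have hdvd : N ∣ 4 * 3^g - 4 := (Nat.modEq_iff_dvd' h34).mp h4.symm
    have hx3 : 3 ≤ 3^g := by
      calc (3:ℕ) = 3^1 := (pow_one 3).symm
        _ ≤ 3^g := Nat.pow_le_pow_right (by norm_num) hg0
    have hle : N ≤ 4 * 3^g - 4 := Nat.le_of_dvd (by omega) hdvd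
    have hx8 : 8 ≤ 3^g := by omega
    have hmul : 8 * 3^g ≤ 3^g * 3^g := Nat.mul_le_mul_right _ hx8
    have hx2 : 3^g * 3^g ≤ 3^m := by
      calc (3:ℕ)^g * 3^g = 3^(g+g) := (pow_add 3 g g).symm
        _ ≤ 3^m := Nat.pow_le_pow_right (by norm_num) (by omega)
    have : 8 * 3^g ≤ N + 1 := by omega
    omega
  -- gcd(3^a, N) facts
  have hN3 : N % 3 = 2 := by
    have : (3:ℕ) ∣ 3^m := dvd_pow_self 3 hm0.ne'
    omega
  have hcop3 : Nat.Coprime 3 N :=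
    (Nat.Prime.coprime_iff_not_dvd Nat.prime_three).mpr (by omega)
  -- key injectivity
  have key : ∀ a b, a < b → b < m → e * 3^a % N ≠ e * 3^b % N := by
    intro a b hab hbm heq
    have hme : e * 3^a ≡ e * 3^b [MOD N] := heq
    have h2 : 3^a * e ≡ 3^a * (e * 3^(b-a)) [MOD N] := by
      calc 3^a * e = e * 3^a := mul_comm _ _
        _ ≡ e * 3^b [MOD N] := hme
        _ = e * 3^(a + (b-a)) := by rw [show a + (b-a) = b from by omega]
        _ = 3^a * (e * 3^(b-a)) := by rw [pow_add]; ring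
    have hcop : Nat.Coprime (3^a) N := hcop3.pow_left a
    have h3 : e ≡ e * 3^(b-a) [MOD N] := h2.cancel_left_of_coprime hcop.symm
    exact noper (b - a) (by omega) (by omega) h3.symm
  constructor
  · rintro ⟨s, hs⟩
    rw [one_mul] at hs
    have heN : e < N := by omega
    have ht : s % m < m := Nat.mod_lt s hm0
    have h1 : e = 3^(s % m) := by
      have h2 : e ≡ 3^(s % m) [MOD N] := by
        have : e ≡ 3^s [MOD N] := by
          rw [hs]; exact Nat.mod_modEq _ _
        exact this.trans (pow3_reduce m s)
      have := hpowlt (s % m) ht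
      have h3 := h2
      unfold Nat.ModEq at h3
      rw [Nat.mod_eq_of_lt heN, Nat.mod_eq_of_lt ‹3^(s%m) < N›] at h3
      exact h3
    have h4 : 3^((n + s % m) % m) ≡ 4 [MOD N] := by
      calc (3:ℕ)^((n + s % m) % m) ≡ 3^(n + s % m) [MOD N] := (pow3_reduce m _).symm
        _ = 3^n * e := by rw [h1, pow_add]
        _ ≡ 4 [MOD N] := hcong
    have hu : (n + s % m) % m < m := Nat.mod_lt _ hm0
    have h5 := hpowlt _ hu
    have h6 : (3:ℕ)^((n + s % m) % m) = 4 := by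
      have h7 := h4
      unfold Nat.ModEq at h7
      rw [Nat.mod_eq_of_lt h5, Nat.mod_eq_of_lt (by omega : (4:ℕ) < N)] at h7
      exact h7
    have h8 : (3:ℕ)^((n + s % m) % m) % 2 = 1 := by
      rw [Nat.pow_mod]; norm_num
    omega
  · have hset : cyclotomicCoset N e = ↑((Finset.range m).image (fun s => e * 3^s % N)) := by
      ext j
      simp only [cyclotomicCoset, Set.mem_setOf_eq, Finset.coe_image, Set.mem_image,
        Finset.mem_coe, Finset.mem_range]
      constructor
      · rintro ⟨s, rfl⟩
        refine ⟨s % m, Nat.mod_lt s hm0, ?_⟩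
        exact ((pow3_reduce m s).mul_left e).symm
      · rintro ⟨s, _, rfl⟩; exact ⟨s, rfl⟩
    rw [hset, Set.ncard_coe_finset, Finset.card_image_of_injOn, Finset.card_range]
    intro a ha b hb hab
    simp only [Finset.mem_coe, Finset.mem_range] at ha hb
    rcases Nat.lt_trichotomy a b with h | h | h
    · exact absurd hab (key a b h hb)
    · exact h
    · exact absurd hab.symm (key b a h ha)
end

section
/- Let m, e, n be positive integers with m > 2 odd, 1 ≤ e ≤ 3^m − 2, and 3^n · e ≡ 4 (mod 3^m − 1). Then the equation (x+1)^e + x^e + 1 = 0 has the unique solution x = 1 in the finite field F_{3^m}; that is, for every x in F_{3^m}, (x+1)^e + x^e + 1 = 0 if and only if x = 1. -/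
theorem stmt11 (m e n : ℕ) (hm : 2 < m) (hodd : Odd m) (hn : 0 < n)
    (he1 : 1 ≤ e) (he2 : e ≤ 3 ^ m - 2)
    (hcong : 3 ^ n * e ≡ 4 [MOD 3 ^ m - 1]) :
    ∀ x : GaloisField 3 m, (x + 1) ^ e + x ^ e + 1 = 0 ↔ x = 1 := by
  set K := GaloisField 3 m
  have hm0 : m ≠ 0 := by omega
  letI : Fintype K := Fintype.ofFinite K
  have hcard : Fintype.card K = 3 ^ m := by
    rw [← Nat.card_eq_fintype_card]
    have h := GaloisField.card 3 m hm0
    exact h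
  set N := 3 ^ m - 1 with hN
  have hNge : 26 ≤ N := by
    have : 3 ^ 3 ≤ 3 ^ m := Nat.pow_le_pow_right (by norm_num) hm
    omega
  have hpos : 0 < 3 ^ n * e := by positivity
  -- 3^n * e = q * N + 4
  have hmod : 3 ^ n * e % N = 4 := by
    have := hcong
    unfold Nat.ModEq at this
    rw [this, Nat.mod_eq_of_lt (by omega)]
  have hkey : 3 ^ n * e = (3 ^ n * e / N) * N + 4 := by
    conv_lhs => rw [← Nat.div_add_mod (3 ^ n * e) N]
    rw [hmod, Nat.mul_comm]
  -- a ^ (3^n * e) = a ^ 4 for all a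
  have hexp : ∀ a : K, a ^ (3 ^ n * e) = a ^ 4 := by
    intro a
    rcases eq_or_ne a 0 with rfl | ha
    · rw [zero_pow hpos.ne', zero_pow (by norm_num)]
    · rw [hkey, pow_add, mul_comm (3 ^ n * e / N) N, pow_mul]
      have hone : a ^ N = 1 := by
        rw [hN, ← hcard]
        exact FiniteField.pow_card_sub_one_eq_one a ha
      rw [hone, one_pow, one_mul]
  intro x
  have hchar : (3 : K) = 0 := by
    have := CharP.cast_eq_zero K 3
    exact_mod_cast this
  have hfrob : ((x + 1) ^ e + x ^ e + 1) ^ 3 ^ n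
      = (x + 1) ^ 4 + x ^ 4 + 1 := by
    rw [add_pow_char_pow, add_pow_char_pow, one_pow, ← pow_mul, ← pow_mul,
      mul_comm e (3 ^ n), hexp, hexp]
  have hiff1 : (x + 1) ^ e + x ^ e + 1 = 0 ↔ (x + 1) ^ 4 + x ^ 4 + 1 = 0 := by
    rw [← hfrob, pow_eq_zero_iff (by positivity)]
  rw [hiff1]
  have hfactor : (x + 1) ^ 4 + x ^ 4 + 1 = -(x - 1) ^ 4 := by
    linear_combination (x ^ 4 + 4 * x ^ 2 + 1) * hchar
  rw [hfactor, neg_eq_zero, pow_eq_zero_iff (by norm_num), sub_eq_zero]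
end

section
/- Let m, e, n be positive integers with m > 2 odd, 1 ≤ e ≤ 3^m − 2, and 3^n · e ≡ 4 (mod 3^m − 1). Then the equation (x+1)^e − x^e − 1 = 0 has the unique solution x = 0 in the finite field F_{3^m}; that is, for every x in F_{3^m}, (x+1)^e − x^e − 1 = 0 if and only if x = 0. -/
theorem stmt12 (m e n : ℕ) (hm : 2 < m) (hodd : Odd m) (hn : 0 < n)
    (he1 : 1 ≤ e) (he2 : e ≤ 3 ^ m - 2)
    (hcong : 3 ^ n * e ≡ 4 [MOD 3 ^ m - 1]) :
    ∀ x : GaloisField 3 m, (x + 1) ^ e - x ^ e - 1 = 0 ↔ x = 0 := by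
  haveI : Fact (Nat.Prime 3) := ⟨by norm_num⟩
  set F := GaloisField 3 m with hF
  haveI : Fintype F := Fintype.ofFinite F
  have hcard : Fintype.card F = 3 ^ m := by
    rw [← Nat.card_eq_fintype_card]
    exact GaloisField.card 3 m (by omega)
  have h27 : (27 : ℕ) ≤ 3 ^ m := by
    calc (27:ℕ) = 3 ^ 3 := by norm_num
    _ ≤ 3 ^ m := Nat.pow_le_pow_right (by norm_num) hm
  have h3F : (3 : F) = 0 := by
    have := CharP.cast_eq_zero F 3
    exact_mod_cast this
  have h2F : (2 : F) ≠ 0 := by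
    have := (@CharP.cast_eq_zero_iff F _ 3 (inferInstance : CharP F 3) 2)
    intro h
    have : (3:ℕ) ∣ 2 := this.mp (by exact_mod_cast h)
    omega
  -- key: y ^ (3^n * e) = y ^ 4 for all y
  have hmod : 3 ^ n * e % (3 ^ m - 1) = 4 := by
    have := hcong
    unfold Nat.ModEq at this
    rw [this]
    exact Nat.mod_eq_of_lt (by omega)
  have hne : 3 ^ n * e ≠ 0 := by positivity
  have key : ∀ y : F, y ^ (3 ^ n * e) = y ^ 4 := by
    intro y
    rcases eq_or_ne y 0 with rfl | hy
    · rw [zero_pow hne, zero_pow (by norm_num)]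
    · have h1 : y ^ (3 ^ m - 1) = 1 := by
        rw [← hcard]; exact FiniteField.pow_card_sub_one_eq_one y hy
      have hdm := Nat.div_add_mod (3 ^ n * e) (3 ^ m - 1)
      rw [hmod] at hdm
      calc y ^ (3 ^ n * e) = y ^ ((3 ^ m - 1) * (3 ^ n * e / (3 ^ m - 1)) + 4) := by
            rw [hdm]
        _ = (y ^ (3 ^ m - 1)) ^ (3 ^ n * e / (3 ^ m - 1)) * y ^ 4 := by
            rw [pow_add, pow_mul]
        _ = y ^ 4 := by rw [h1, one_pow, one_mul]
  intro x
  -- reduce to the degree-4 equation via Frobenius injectivity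
  have hfrob : ((x + 1) ^ e - x ^ e - 1 = 0) ↔ ((x + 1) ^ 4 - x ^ 4 - 1 = 0) := by
    rw [← pow_eq_zero_iff (a := (x + 1) ^ e - x ^ e - 1) (n := 3 ^ n) (by positivity)]
    have hex : ((x + 1) ^ e - x ^ e - 1 : F) ^ 3 ^ n = (x + 1) ^ 4 - x ^ 4 - 1 := by
      have hmap : ((x + 1) ^ e - x ^ e - 1 : F) ^ 3 ^ n
          = iterateFrobenius F 3 n ((x + 1) ^ e - x ^ e - 1) := by
        rw [iterateFrobenius_def]
      rw [hmap, map_sub, map_sub, map_pow, map_pow, map_one,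
        iterateFrobenius_def, iterateFrobenius_def, ← pow_mul, ← pow_mul, key, key]
    rw [hex]
  rw [hfrob]
  constructor
  · intro h
    have hcube : x * (x ^ 2 + 1) = 0 := by
      linear_combination h - (x ^ 3 + 2 * x ^ 2 + x) * h3F
    rcases mul_eq_zero.mp hcube with h0 | hsq
    · exact h0
    · exfalso
      have hx0 : x ≠ 0 := by
        intro h0
        rw [h0] at hsq
        simp at hsq
      have hx2 : x ^ 2 = -1 := by linear_combination hsq
      obtain ⟨t, ht⟩ := hodd
      have h9 : (9 : ℕ) ^ t % 4 = 1 := by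
        have h9' : (9 : ℕ) ^ t ≡ 1 ^ t [MOD 4] := Nat.ModEq.pow t (by decide)
        simpa [Nat.ModEq] using h9'
      have hpow : (3 : ℕ) ^ m = 3 * 9 ^ t := by
        rw [ht, pow_succ, pow_mul]
        norm_num [mul_comm]
      have hk : ∃ s, 3 ^ m - 1 = 2 * (2 * s + 1) := ⟨3 * (9 ^ t / 4), by omega⟩
      obtain ⟨s, hs⟩ := hk
      have hone : x ^ (3 ^ m - 1) = 1 := by
        rw [← hcard]; exact FiniteField.pow_card_sub_one_eq_one x hx0
      have hneg : x ^ (3 ^ m - 1) = -1 := by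
        rw [hs, pow_mul, hx2, Odd.neg_one_pow ⟨s, by ring⟩]
      exact h2F (by linear_combination hneg - hone)
  · rintro rfl
    norm_num
end

section
/- Let m > 7 be a prime and set e = 3^{(m+3)/2} + 13. Then e does not lie in the same 3-cyclotomic coset modulo 3^m − 1 as e' = 3^{(m−1)/2} + 13, nor as e' = 3^{(m+1)/2} + 13; that is, for every nonnegative integer k, 3^k · (3^{(m+3)/2} + 13) is not congruent to 3^{(m−1)/2} + 13 modulo 3^m − 1, and 3^k · (3^{(m+3)/2} + 13) is not congruent to 3^{(m+1)/2} + 13 modulo 3^m − 1. -/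
open Finset

private lemma geom3 (n : ℕ) : 2 * ∑ i ∈ Finset.range n, 3^i + 1 = 3^n := by
  induction n with
  | zero => simp
  | succ n ih =>
    rw [Finset.sum_range_succ, pow_succ]
    linarith

private lemma pow3_sum_inj : ∀ N : ℕ, ∀ S T : Finset ℕ,
    (∑ i ∈ S, 3^i) = N → (∑ i ∈ T, 3^i) = N → S = T := by
  intro N
  induction N using Nat.strong_induction_on with
  | _ N ih =>
    intro S T hS hT
    rcases Nat.eq_zero_or_pos N with h0 | hpos
    · subst h0
      have hS' : S = ∅ := by
        rw [Finset.eq_empty_iff_forall_notMem]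
        intro x hx
        have h1 : 3^x ≤ 0 := hS ▸ Finset.single_le_sum (f := fun i => 3^i)
          (by intro i _; positivity) hx
        have : (0:ℕ) < 3^x := by positivity
        omega
      have hT' : T = ∅ := by
        rw [Finset.eq_empty_iff_forall_notMem]
        intro x hx
        have h1 : 3^x ≤ 0 := hT ▸ Finset.single_le_sum (f := fun i => 3^i)
          (by intro i _; positivity) hx
        have : (0:ℕ) < 3^x := by positivity
        omega
      rw [hS', hT']
    · have hSne : S.Nonempty := by
        rcases Finset.eq_empty_or_nonempty S with h | h
        · subst h; simp at hS; omega
        · exact h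
      have hTne : T.Nonempty := by
        rcases Finset.eq_empty_or_nonempty T with h | h
        · subst h; simp at hT; omega
        · exact h
      set a := S.max' hSne with ha
      set b := T.max' hTne with hb
      have haS : a ∈ S := S.max'_mem hSne
      have hbT : b ∈ T := T.max'_mem hTne
      have hSsub : S ⊆ Finset.range (a+1) := by
        intro i hi; rw [Finset.mem_range]; exact Nat.lt_succ_of_le (S.le_max' i hi)
      have hTsub : T ⊆ Finset.range (b+1) := by
        intro i hi; rw [Finset.mem_range]; exact Nat.lt_succ_of_le (T.le_max' i hi)
      have hNa : 3^a ≤ N := hS ▸ Finset.single_le_sum (f := fun i => 3^i)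
        (by intro i _; positivity) haS
      have hNb : 3^b ≤ N := hT ▸ Finset.single_le_sum (f := fun i => 3^i)
        (by intro i _; positivity) hbT
      have hNa' : N < 3^(a+1) := by
        have h1 : N ≤ ∑ i ∈ Finset.range (a+1), 3^i :=
          hS ▸ Finset.sum_le_sum_of_subset hSsub
        have h2 := geom3 (a+1)
        omega
      have hNb' : N < 3^(b+1) := by
        have h1 : N ≤ ∑ i ∈ Finset.range (b+1), 3^i :=
          hT ▸ Finset.sum_le_sum_of_subset hTsub
        have h2 := geom3 (b+1)
        omega
      have hab : a = b := by
        have h1 : a < b + 1 := by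
          have := lt_of_le_of_lt hNa hNb'
          exact (Nat.pow_lt_pow_iff_right (by norm_num)).mp this
        have h2 : b < a + 1 := by
          have := lt_of_le_of_lt hNb hNa'
          exact (Nat.pow_lt_pow_iff_right (by norm_num)).mp this
        omega
      have hS' : ∑ i ∈ S.erase a, 3^i = N - 3^a := by
        have h1 : ∑ i ∈ S.erase a, 3^i + 3^a = ∑ i ∈ S, 3^i :=
          Finset.sum_erase_add S _ haS
        omega
      have hT' : ∑ i ∈ T.erase a, 3^i = N - 3^a := by
        have h1 : ∑ i ∈ T.erase a, 3^i + 3^a = ∑ i ∈ T, 3^i :=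
          Finset.sum_erase_add T _ (hab ▸ hbT)
        omega
      have hlt : N - 3^a < N := by
        have : (0:ℕ) < 3^a := by positivity
        omega
      have hErase : S.erase a = T.erase a := ih (N - 3^a) hlt _ _ hS' hT'
      calc S = insert a (S.erase a) := (Finset.insert_erase haS).symm
        _ = insert a (T.erase a) := by rw [hErase]
        _ = T := Finset.insert_erase (hab ▸ hbT)

private lemma mod_two_mul (x m : ℕ) (hx : x < 2*m) : x % m = x ∨ x % m + m = x := by
  rcases lt_or_ge x m with h | h
  · left; exact Nat.mod_eq_of_lt h
  · right
    rw [Nat.mod_eq_sub_mod h, Nat.mod_eq_of_lt (by omega)]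
    omega

private lemma pow_mod_cycle (m x : ℕ) (hm : 0 < m) : 3^x ≡ 3^(x % m) [MOD 3^m - 1] := by
  have h3 : 1 ≤ (3:ℕ)^m := Nat.one_le_pow _ _ (by norm_num)
  have h1 : (3:ℕ)^m ≡ 1 [MOD 3^m - 1] := by
    show (3:ℕ)^m % (3^m-1) = 1 % (3^m-1)
    rw [show (3:ℕ)^m = (3^m - 1) + 1 by omega]
    exact Nat.add_mod_left _ _
  calc (3:ℕ)^x = (3^m)^(x/m) * 3^(x%m) := by
        rw [← pow_mul, ← pow_add, Nat.div_add_mod]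
      _ ≡ 1^(x/m) * 3^(x%m) [MOD 3^m - 1] := Nat.ModEq.mul ((h1.pow _)) Nat.ModEq.rfl
      _ = 3^(x%m) := by rw [one_pow, one_mul]

private lemma main_aux (m t k u : ℕ) (hmt : m = 2*t+1) (ht5 : 5 ≤ t)
    (hu : u = t ∨ u = t+1) :
    ¬ (3^k * (3^(t+2) + 13) ≡ 3^u + 13 [MOD 3^m - 1]) := by
  intro h
  have hm0 : 0 < m := by omega
  set d := k % m with hdd
  set a := (k + t + 2) % m with haa
  set b := (k + 2) % m with hbb
  set c := (k + 1) % m with hcc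
  have hd : d < m := Nat.mod_lt _ hm0
  have ham : a < m := Nat.mod_lt _ hm0
  have hbm : b < m := Nat.mod_lt _ hm0
  have hcm : c < m := Nat.mod_lt _ hm0
  -- characterizations of a, b, c in terms of d
  have hrwa : a = (d + t + 2) % m := by
    rw [haa, hdd]
    conv_lhs => rw [← Nat.mod_add_div k m,
      show k % m + m * (k/m) + t + 2 = (k % m + t + 2) + m * (k/m) by ring]
    rw [Nat.add_mul_mod_self_left]
  have hrwb : b = (d + 2) % m := by
    rw [hbb, hdd]
    conv_lhs => rw [← Nat.mod_add_div k m,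
      show k % m + m * (k/m) + 2 = (k % m + 2) + m * (k/m) by ring]
    rw [Nat.add_mul_mod_self_left]
  have hrwc : c = (d + 1) % m := by
    rw [hcc, hdd]
    conv_lhs => rw [← Nat.mod_add_div k m,
      show k % m + m * (k/m) + 1 = (k % m + 1) + m * (k/m) by ring]
    rw [Nat.add_mul_mod_self_left]
  have hA : a = d + t + 2 ∨ a + m = d + t + 2 := by
    rw [hrwa]; exact mod_two_mul _ _ (by omega)
  have hB : b = d + 2 ∨ b + m = d + 2 := by
    rw [hrwb]; exact mod_two_mul _ _ (by omega)
  have hC : c = d + 1 ∨ c + m = d + 1 := by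
    rw [hrwc]; exact mod_two_mul _ _ (by omega)
  -- the congruence with reduced exponents
  have key : 3^k * (3^(t+2) + 13) = 3^(k+t+2) + 3^(k+2) + 3^(k+1) + 3^k := by ring
  have h' : 3^(k+t+2) + 3^(k+2) + 3^(k+1) + 3^k ≡ 3^u + 13 [MOD 3^m - 1] := key ▸ h
  have hsum : 3^a + 3^b + 3^c + 3^d ≡ 3^u + 13 [MOD 3^m - 1] :=
    ((((pow_mod_cycle m (k+t+2) hm0).add (pow_mod_cycle m (k+2) hm0)).add
      (pow_mod_cycle m (k+1) hm0)).add (pow_mod_cycle m k hm0)).symm.trans h'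
  -- distinctness
  have hab : a ≠ b := by omega
  have hac : a ≠ c := by omega
  have had : a ≠ d := by omega
  have hbc : b ≠ c := by omega
  have hbd : b ≠ d := by omega
  have hcd : c ≠ d := by omega
  have hu5 : 5 ≤ u := by omega
  have hum : u < m := by omega
  -- finset sums
  have hSsum : ∑ i ∈ ({a,b,c,d} : Finset ℕ), 3^i = 3^a + 3^b + 3^c + 3^d := by
    rw [show ({a,b,c,d} : Finset ℕ) = insert a (insert b (insert c {d})) from rfl,
      Finset.sum_insert (by simp [hab, hac, had]),
      Finset.sum_insert (by simp [hbc, hbd]),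
      Finset.sum_insert (by simp [hcd]), Finset.sum_singleton]
    ring
  have hTsum : ∑ i ∈ ({u,2,1,0} : Finset ℕ), 3^i = 3^u + 13 := by
    rw [show ({u,2,1,0} : Finset ℕ) = insert u (insert 2 (insert 1 {0})) from rfl,
      Finset.sum_insert (by simp; omega),
      Finset.sum_insert (by simp),
      Finset.sum_insert (by simp), Finset.sum_singleton]
    norm_num
  -- bounds
  have hgeom := geom3 m
  have h3m : 3 ≤ 3^m := by
    calc (3:ℕ) = 3^1 := (pow_one 3).symm
      _ ≤ 3^m := Nat.pow_le_pow_right (by norm_num) (by omega)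
  have hSlt : 3^a + 3^b + 3^c + 3^d < 3^m - 1 := by
    have hsub : ({a,b,c,d} : Finset ℕ) ⊆ Finset.range m := by
      intro i hi
      simp only [Finset.mem_insert, Finset.mem_singleton] at hi
      rw [Finset.mem_range]
      rcases hi with h|h|h|h <;> omega
    have h1 : ∑ i ∈ ({a,b,c,d} : Finset ℕ), 3^i ≤ ∑ i ∈ Finset.range m, 3^i :=
      Finset.sum_le_sum_of_subset hsub
    rw [hSsum] at h1
    omega
  have hTlt : 3^u + 13 < 3^m - 1 := by
    have hsub : ({u,2,1,0} : Finset ℕ) ⊆ Finset.range m := by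
      intro i hi
      simp only [Finset.mem_insert, Finset.mem_singleton] at hi
      rw [Finset.mem_range]
      rcases hi with h|h|h|h <;> omega
    have h1 : ∑ i ∈ ({u,2,1,0} : Finset ℕ), 3^i ≤ ∑ i ∈ Finset.range m, 3^i :=
      Finset.sum_le_sum_of_subset hsub
    rw [hTsum] at h1
    omega
  -- equality of naturals
  have hEq : 3^a + 3^b + 3^c + 3^d = 3^u + 13 := by
    have h1 : (3^a + 3^b + 3^c + 3^d) % (3^m - 1) = (3^u + 13) % (3^m - 1) := hsum
    rw [Nat.mod_eq_of_lt hSlt, Nat.mod_eq_of_lt hTlt] at h1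
    exact h1
  -- equality of finsets
  have hST : ({a,b,c,d} : Finset ℕ) = ({u,2,1,0} : Finset ℕ) :=
    pow3_sum_inj (3^u + 13) _ _ (by rw [hSsum, hEq]) hTsum
  -- extract memberships and contradict
  have hmem1 : d = u ∨ d = 2 ∨ d = 1 ∨ d = 0 := by
    have : d ∈ ({u,2,1,0} : Finset ℕ) := hST ▸ (by simp : d ∈ ({a,b,c,d} : Finset ℕ))
    simpa using this
  have hmem2 : a = u ∨ a = 2 ∨ a = 1 ∨ a = 0 := by
    have : a ∈ ({u,2,1,0} : Finset ℕ) := hST ▸ (by simp : a ∈ ({a,b,c,d} : Finset ℕ))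
    simpa using this
  have hmem0 : 0 = a ∨ 0 = b ∨ 0 = c ∨ 0 = d := by
    have : (0:ℕ) ∈ ({a,b,c,d} : Finset ℕ) := hST.symm ▸ (by simp : (0:ℕ) ∈ ({u,2,1,0} : Finset ℕ))
    simpa using this
  omega

theorem stmt14 (m : ℕ) (hm : Nat.Prime m) (hm7 : 7 < m) :
    ∀ k : ℕ,
      ¬ (3 ^ k * (3 ^ ((m + 3) / 2) + 13) ≡ 3 ^ ((m - 1) / 2) + 13 [MOD 3 ^ m - 1]) ∧
      ¬ (3 ^ k * (3 ^ ((m + 3) / 2) + 13) ≡ 3 ^ ((m + 1) / 2) + 13 [MOD 3 ^ m - 1]) := by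
  intro k
  have hmo : m % 2 = 1 := Nat.odd_iff.mp (hm.odd_of_ne_two (by omega))
  have h32 : (m + 3) / 2 = (m-1)/2 + 2 := by omega
  have h12 : (m + 1) / 2 = (m-1)/2 + 1 := by omega
  rw [h32, h12]
  have h9 : m ≠ 9 := by intro h; rw [h] at hm; norm_num at hm
  have hmt : m = 2*((m-1)/2)+1 := by omega
  have ht5 : 5 ≤ (m-1)/2 := by omega
  constructor
  · exact main_aux m ((m-1)/2) k ((m-1)/2) hmt ht5 (Or.inl rfl)
  · exact main_aux m ((m-1)/2) k ((m-1)/2 + 1) hmt ht5 (Or.inr rfl)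
end
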